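/- arXiv:1203.3775 — 2 statements merged into one kernel-verified Lean document; each statement's English description precedes it below -/
import Mathlib

section
/- Let S = {v_1,...,v_m} be a finite subset of R^n and let E_S : R[x]_{n,2d} → R^m be the evaluation map p ↦ (p(v_1),...,p(v_m)). Then the image Σ_{2d}(S) = E_S(Σ_{n,2d}) of the sums-of-squares cone is a closed convex cone in R^m. -/
/-!
Write `W ⊆ ℝ^m` for the image of the degree-`d` forms under evaluation at the points. The evaluation
image of the sums-of-squares cone consists of the sums of pointwise squares `∑ wⱼ²` with `wⱼ ∈ W`;
rescaling each `wⱼ` to a Euclidean unit vector, it is the conical hull of the compact set `K` of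
squares of unit vectors of `W`. Since `K` lies in the hyperplane `∑ yᵢ = 1`, which misses the
origin, this cone is closed: by Carathéodory `conv K` is compact, and the part of the cone below
height `R` is the compact set `[0, R] • conv K`.
-/

open MvPolynomial

/-- `p` is a sum of squares of forms of degree `d`. -/
def IsSOS (n d : ℕ) (p : MvPolynomial (Fin n) ℝ) : Prop :=
  ∃ (k : ℕ) (f : Fin k → MvPolynomial (Fin n) ℝ),
    (∀ i, (f i).IsHomogeneous d) ∧ p = ∑ i, (f i) ^ 2

open scoped Pointwise

theorem PointedCone.exists_mem_smul_convexHull_of_mem_hull {E : Type*} [AddCommGroup E]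
    [Module ℝ E] {K : Set E} (hK : K.Nonempty) {x : E} (hx : x ∈ PointedCone.hull ℝ K) :
    ∃ r : ℝ, 0 ≤ r ∧ x ∈ r • convexHull ℝ K := by
  induction hx using Submodule.span_induction with
  | mem x hx => exact ⟨1, zero_le_one, by simpa using subset_convexHull ℝ K hx⟩
  | zero => exact ⟨0, le_rfl, by rw [Set.zero_smul_set (hK.mono (subset_convexHull ℝ K))]; rfl⟩
  | add x y _ _ hx hy =>
    obtain ⟨r, hr, hxr⟩ := hx
    obtain ⟨s, hs, hys⟩ := hy
    refine ⟨r + s, add_nonneg hr hs, ?_⟩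
    rw [(convex_convexHull ℝ K).add_smul hr hs]
    exact Set.add_mem_add hxr hys
  | smul c x _ hx =>
    obtain ⟨r, hr, hxr⟩ := hx
    refine ⟨c * r, mul_nonneg c.2 hr, ?_⟩
    rw [mul_smul]
    exact Set.smul_mem_smul_set (a := (c : ℝ)) hxr

section FiniteDimensional

variable {E : Type*} [NormedAddCommGroup E] [NormedSpace ℝ E] [FiniteDimensional ℝ E] {K : Set E}

theorem IsCompact.convexHull (hK : IsCompact K) : IsCompact (convexHull ℝ K) := by
  -- Carathéodory: every point of the hull is a convex combination of at most `dim E + 1` points.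
  have hcarath : _root_.convexHull ℝ K = ⋃ k ≤ Module.finrank ℝ E + 1,
      (fun p : (Fin k → ℝ) × (Fin k → E) => ∑ i, p.1 i • p.2 i) ''
        (stdSimplex ℝ (Fin k) ×ˢ Set.univ.pi fun _ => K) := by
    apply subset_antisymm
    · intro x hx
      obtain ⟨ι, _, z, w, hzK, hz, hw0, hw1, rfl⟩ := eq_pos_convex_span_of_mem_convexHull hx
      let e := (Fintype.equivFin ι).symm
      have hcard : Fintype.card ι ≤ Module.finrank ℝ E + 1 :=
        hz.card_le_finrank_succ.trans (by gcongr; exact Submodule.finrank_le _)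
      refine Set.mem_iUnion₂.2 ⟨_, hcard, (w ∘ e, z ∘ e), ⟨⟨fun i => (hw0 _).le, ?_⟩,
        fun i _ => hzK (Set.mem_range_self _)⟩, e.sum_comp fun i => w i • z i⟩
      simpa using (e.sum_comp w).trans hw1
    · simp only [Set.iUnion_subset_iff, Set.image_subset_iff]
      rintro k - ⟨w, z⟩ ⟨hw, hz⟩
      exact (convex_convexHull ℝ K).sum_mem (fun i _ => hw.1 i) hw.2
        fun i _ => subset_convexHull ℝ K (hz i trivial)
  rw [hcarath]
  exact (Set.finite_le_nat _).isCompact_biUnion fun k _ =>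
    ((isCompact_stdSimplex ℝ (Fin k)).prod (isCompact_univ_pi fun _ => hK)).image (by fun_prop)

theorem PointedCone.isClosed_hull (hK : IsCompact K) (L : E →ₗ[ℝ] ℝ) (hL : ∀ x ∈ K, L x = 1) :
    IsClosed (PointedCone.hull ℝ K : Set E) := by
  rcases K.eq_empty_or_nonempty with rfl | hne
  · simp
  have hLhull : ∀ z ∈ convexHull ℝ K, L z = 1 :=
    convexHull_min hL (convex_hyperplane L.isLinear 1)
  refine isClosed_of_closure_subset fun y hy => ?_
  set R := L y + 1
  -- Near `y` the cone is cut off at height `R`, where it becomes the compact set `[0, R] • conv K`.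
  have hcut : {x | L x < R} ∩ PointedCone.hull ℝ K ⊆ Set.Icc 0 R • convexHull ℝ K := by
    rintro x ⟨hxR, hx⟩
    obtain ⟨r, hr, z, hz, rfl⟩ := exists_mem_smul_convexHull_of_mem_hull hne hx
    simp only [Set.mem_ofPred_eq, map_smul, hLhull z hz, smul_eq_mul, mul_one] at hxR
    exact Set.smul_mem_smul ⟨hr, hxR.le⟩ hz
  have hsub : Set.Icc 0 R • convexHull ℝ K ⊆ PointedCone.hull ℝ K := by
    rintro _ ⟨r, hr, z, hz, rfl⟩
    exact (PointedCone.hull ℝ K).smul_mem hr.1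
      (convexHull_min PointedCone.subset_hull (PointedCone.hull ℝ K).convex hz)
  have hopen : IsOpen {x | L x < R} := isOpen_lt L.continuous_of_finiteDimensional continuous_const
  have hcpt : IsCompact (Set.Icc 0 R • convexHull ℝ K) := isCompact_Icc.smul_set hK.convexHull
  exact hsub (hcpt.isClosed.closure_subset_iff.2 hcut
    (hopen.inter_closure ⟨show L y < R by simp [R], hy⟩))

end FiniteDimensional

section UnitSquares

variable {ι : Type*} [Fintype ι] (W : Submodule ℝ (ι → ℝ))

def unitSquares : Set (ι → ℝ) := (· ^ 2) '' {w | w ∈ W ∧ ∑ i, w i ^ 2 = 1}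

theorem isCompact_unitSquares : IsCompact (unitSquares W) := by
  refine IsCompact.image (Metric.isCompact_of_isClosed_isBounded ?_ ?_) (by fun_prop)
  · exact (Submodule.closed_of_finiteDimensional W).inter (isClosed_eq (by fun_prop) (by fun_prop))
  · refine (Metric.isBounded_closedBall (x := (0 : ι → ℝ)) (r := 1)).subset fun w hw => ?_
    rw [mem_closedBall_zero_iff, pi_norm_le_iff_of_nonneg zero_le_one]
    intro i
    rw [Real.norm_eq_abs, ← sq_le_one_iff_abs_le_one]
    exact hw.2 ▸ Finset.single_le_sum (fun j _ => sq_nonneg (w j)) (Finset.mem_univ i)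

theorem isClosed_hull_unitSquares : IsClosed (PointedCone.hull ℝ (unitSquares W) : Set (ι → ℝ)) :=
  PointedCone.isClosed_hull (isCompact_unitSquares W) (∑ i, LinearMap.proj i) <| by
    rintro _ ⟨w, ⟨-, hw⟩, rfl⟩
    simpa using hw

variable {W} in
theorem sq_mem_hull_unitSquares {w : ι → ℝ} (hw : w ∈ W) :
    w ^ 2 ∈ PointedCone.hull ℝ (unitSquares W) := by
  set s := ∑ i, w i ^ 2
  rcases (Finset.sum_nonneg fun i _ => sq_nonneg (w i) : 0 ≤ s).eq_or_lt with hs | hs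
  · have : w = 0 := funext fun i => by
      simpa using (Finset.sum_eq_zero_iff_of_nonneg fun j _ => sq_nonneg (w j)).1 hs.symm i
    simp [this]
  have hunit : ((√s)⁻¹ • w) ^ 2 ∈ unitSquares W := by
    refine ⟨_, ⟨W.smul_mem _ hw, ?_⟩, rfl⟩
    simp only [Pi.smul_apply, smul_eq_mul, mul_pow, inv_pow, ← Finset.mul_sum]
    rw [Real.sq_sqrt hs.le]
    exact inv_mul_cancel₀ hs.ne'
  have hw2 : w ^ 2 = s • ((√s)⁻¹ • w) ^ 2 := by
    rw [smul_pow, inv_pow, Real.sq_sqrt hs.le, smul_smul, mul_inv_cancel₀ hs.ne', one_smul]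
  rw [hw2]
  exact (PointedCone.hull ℝ (unitSquares W)).smul_mem hs.le (PointedCone.subset_hull hunit)

end UnitSquares

namespace IsSOS

variable {n d : ℕ} {p q : MvPolynomial (Fin n) ℝ}

theorem zero : IsSOS n d 0 := ⟨0, Fin.elim0, fun i => i.elim0, by simp⟩

theorem sq (hp : p.IsHomogeneous d) : IsSOS n d (p ^ 2) := ⟨1, fun _ => p, fun _ => hp, by simp⟩

theorem add (hp : IsSOS n d p) (hq : IsSOS n d q) : IsSOS n d (p + q) := by
  obtain ⟨k, f, hf, rfl⟩ := hp
  obtain ⟨l, g, hg, rfl⟩ := hq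
  exact ⟨k + l, Fin.append f g, Fin.addCases (by simpa using hf) (by simpa using hg),
    by simp [Fin.sum_univ_add]⟩

theorem smul {c : ℝ} (hc : 0 ≤ c) (hp : IsSOS n d p) : IsSOS n d (c • p) := by
  obtain ⟨k, f, hf, rfl⟩ := hp
  refine ⟨k, fun i => √c • f i, fun i => (homogeneousSubmodule (Fin n) ℝ d).smul_mem _ (hf i), ?_⟩
  simp [Finset.smul_sum, smul_pow, Real.sq_sqrt hc]

end IsSOS

section Evaluation

variable {σ ι : Type*}

noncomputable def evalAt (v : ι → σ → ℝ) : MvPolynomial σ ℝ →ₐ[ℝ] (ι → ℝ) :=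
  AlgHom.pi fun i => aeval (v i)

@[simp]
theorem evalAt_apply (v : ι → σ → ℝ) (p : MvPolynomial σ ℝ) (i : ι) :
    evalAt v p i = eval (v i) p := by
  simp [evalAt]

end Evaluation

theorem setOf_isSOS_eval_eq_hull {ι : Type*} [Fintype ι] (n d : ℕ) (v : ι → Fin n → ℝ) :
    {y : ι → ℝ | ∃ p : MvPolynomial (Fin n) ℝ, IsSOS n d p ∧ y = fun i => eval (v i) p} =
      PointedCone.hull ℝ
        (unitSquares ((homogeneousSubmodule (Fin n) ℝ d).map (evalAt v).toLinearMap)) := by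
  ext y
  constructor
  · rintro ⟨p, ⟨k, f, hf, rfl⟩, rfl⟩
    have hy : (fun i => eval (v i) (∑ j, f j ^ 2)) = ∑ j, evalAt v (f j) ^ 2 := by
      ext; simp
    rw [hy]
    exact sum_mem fun j _ => sq_mem_hull_unitSquares <|
      Submodule.mem_map_of_mem ((mem_homogeneousSubmodule _ _).2 (hf j))
  · intro hy
    induction hy using Submodule.span_induction with
    | mem x hx =>
      obtain ⟨_, ⟨⟨f, hf, rfl⟩, -⟩, rfl⟩ := hx
      exact ⟨f ^ 2, IsSOS.sq hf, by ext; simp⟩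
    | zero => exact ⟨0, IsSOS.zero, by ext; simp⟩
    | add x y _ _ hx hy =>
      obtain ⟨p, hp, rfl⟩ := hx
      obtain ⟨q, hq, rfl⟩ := hy
      exact ⟨p + q, hp.add hq, by ext; simp⟩
    | smul c x _ hx =>
      obtain ⟨p, hp, rfl⟩ := hx
      exact ⟨(c : ℝ) • p, hp.smul c.2, by ext; simp [← Nonneg.coe_smul]⟩

/-- the image `Σ_{2d}(S)` of the sums-of-squares cone under the
evaluation map `E_S : p ↦ (p(v₁),…,p(v_m))` is a closed convex cone in `ℝ^m`. -/
theorem stmt_12 (n d m : ℕ) (v : Fin m → (Fin n → ℝ)) :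
    IsClosed {y : Fin m → ℝ |
        ∃ p : MvPolynomial (Fin n) ℝ, IsSOS n d p ∧ y = fun i => eval (v i) p} ∧
    Convex ℝ {y : Fin m → ℝ |
        ∃ p : MvPolynomial (Fin n) ℝ, IsSOS n d p ∧ y = fun i => eval (v i) p} ∧
    (∀ (c : ℝ) (y : Fin m → ℝ), 0 ≤ c →
        (∃ p : MvPolynomial (Fin n) ℝ, IsSOS n d p ∧ y = fun i => eval (v i) p) →
        (∃ p : MvPolynomial (Fin n) ℝ, IsSOS n d p ∧ c • y = fun i => eval (v i) p)) := by
  rw [setOf_isSOS_eval_eq_hull]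
  refine ⟨isClosed_hull_unitSquares _, PointedCone.convex _, ?_⟩
  rintro c _ hc ⟨p, hp, rfl⟩
  exact ⟨c • p, hp.smul hc, by ext; simp⟩
end

section
/- Let M and N be positive semidefinite quadratic forms on a finite-dimensional real vector space with N of rank one and ker M ⊆ ker N. Then there exists λ > 0 such that M - λN is positive semidefinite and rank(M - λN) = rank(M) - 1. -/
/-!
Write `N = w wᵀ`. As `M` is symmetric and `ker M ⊆ ker N = w⊥`, the vector `w` lies in the range
of `M`, say `w = M u`. Then `M - λ N` with `λ = 1 / uᵀ M u` is Wedderburn's rank-one reduction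
`M - (M u)(M u)ᵀ / uᵀ M u`: it is positive semidefinite by Cauchy–Schwarz for the form of `M`, and
its kernel is `ker M` enlarged by `u`, so its rank is `rank M - 1`.
-/

open Matrix
open scoped MatrixOrder

namespace Matrix

variable {n : Type*} [Fintype n]

lemma IsSymm.dotProduct_mulVec_comm {α : Type*} [CommSemiring α] {A : Matrix n n α}
    (hA : A.IsSymm) (x y : n → α) : x ⬝ᵥ A *ᵥ y = A *ᵥ x ⬝ᵥ y := by
  rw [dotProduct_mulVec, ← mulVec_transpose, hA.eq]

lemma PosSemidef.dotProduct_mulVec_pos_of_mulVec_ne_zero {M : Matrix n n ℝ} (hM : M.PosSemidef)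
    {x : n → ℝ} (hx : M *ᵥ x ≠ 0) : 0 < x ⬝ᵥ M *ᵥ x :=
  lt_of_le_of_ne (by simpa using hM.dotProduct_mulVec_nonneg x)
    fun h => hx ((hM.dotProduct_mulVec_zero_iff x).mp (by simpa using h.symm))

lemma PosSemidef.dotProduct_mulVec_sq_le {M : Matrix n n ℝ} (hM : M.PosSemidef) (x y : n → ℝ) :
    (x ⬝ᵥ M *ᵥ y) ^ 2 ≤ (x ⬝ᵥ M *ᵥ x) * (y ⬝ᵥ M *ᵥ y) := by
  classical
  obtain ⟨B, rfl⟩ := CStarAlgebra.nonneg_iff_eq_star_mul_self.mp hM.nonneg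
  have hB : ∀ a b : n → ℝ, a ⬝ᵥ (star B * B) *ᵥ b = B *ᵥ a ⬝ᵥ B *ᵥ b := fun a b => by
    rw [← mulVec_mulVec, dotProduct_mulVec, star_eq_conjTranspose,
      conjTranspose_eq_transpose_of_trivial, vecMul_transpose]
  rw [hB, hB, hB]
  simpa only [dotProduct, ← sq] using Finset.sum_mul_sq_le_sq_mul_sq Finset.univ (B *ᵥ x) (B *ᵥ y)

lemma IsSymm.mem_range_mulVecLin {M : Matrix n n ℝ} (hM : M.IsSymm) {w : n → ℝ}
    (hw : ∀ x ∈ LinearMap.ker M.mulVecLin, w ⬝ᵥ x = 0) : w ∈ LinearMap.range M.mulVecLin := by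
  have hdisj : Disjoint (LinearMap.range M.mulVecLin) (LinearMap.ker M.mulVecLin) := by
    rw [Submodule.disjoint_def]
    rintro _ ⟨u, rfl⟩ hMu
    refine dotProduct_self_eq_zero.mp ?_
    rw [mulVecLin_apply, ← hM.dotProduct_mulVec_comm, show M *ᵥ (M *ᵥ u) = 0 from hMu,
      dotProduct_zero]
  have htop := Submodule.eq_top_of_disjoint _ _
    (LinearMap.finrank_range_add_finrank_ker M.mulVecLin).ge hdisj
  obtain ⟨a, ha, b, hb, rfl⟩ := Submodule.mem_sup.mp (htop ▸ Submodule.mem_top (x := w))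
  have hab : a ⬝ᵥ b = 0 := by
    obtain ⟨u, rfl⟩ := ha
    rw [mulVecLin_apply, ← hM.dotProduct_mulVec_comm, show M *ᵥ b = 0 from hb, dotProduct_zero]
  have hbb : b ⬝ᵥ b = 0 := by
    simpa [add_dotProduct, hab] using hw b hb
  rwa [dotProduct_self_eq_zero.mp hbb, add_zero]

lemma PosSemidef.exists_eq_vecMulVec_of_rank_eq_one {N : Matrix n n ℝ} (hN : N.PosSemidef)
    (hrk : N.rank = 1) : ∃ w : n → ℝ, w ≠ 0 ∧ N = vecMulVec w w := by
  obtain ⟨v, hv⟩ : ∃ v, N *ᵥ v ≠ 0 := by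
    by_contra! h
    have hN0 : N = 0 := ext_iff_mulVec.mpr fun x => by simp [h x]
    simp [hN0] at hrk
  set z := N *ᵥ v
  have ha : 0 < v ⬝ᵥ z := hN.dotProduct_mulVec_pos_of_mulVec_ne_zero hv
  have hrange : LinearMap.range N.mulVecLin = Submodule.span ℝ {z} :=
    (Submodule.eq_of_le_of_finrank_eq
      ((Submodule.span_singleton_le_iff_mem _ _).mpr (LinearMap.mem_range_self N.mulVecLin v))
      ((finrank_span_singleton hv).trans hrk.symm)).symm
  refine ⟨(√(v ⬝ᵥ z))⁻¹ • z, by positivity, ext_iff_mulVec.mpr fun x => ?_⟩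
  obtain ⟨c, hc⟩ :=
    Submodule.mem_span_singleton.mp (hrange ▸ LinearMap.mem_range_self N.mulVecLin x)
  have hc' : c * (v ⬝ᵥ z) = z ⬝ᵥ x := calc
    c * (v ⬝ᵥ z) = v ⬝ᵥ N *ᵥ x := by rw [← smul_eq_mul, ← dotProduct_smul, hc]; rfl
    _ = z ⬝ᵥ x := (isHermitian_iff_isSymm.mp hN.1).dotProduct_mulVec_comm v x
  have hsq : (√(v ⬝ᵥ z))⁻¹ * (√(v ⬝ᵥ z))⁻¹ = (v ⬝ᵥ z)⁻¹ := by
    rw [← mul_inv, Real.mul_self_sqrt ha.le]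
  rw [← mulVecLin_apply, ← hc, vecMulVec_mulVec, op_smul_eq_smul, smul_dotProduct, smul_smul,
    smul_eq_mul, mul_right_comm, hsq, ← hc', mul_comm c, inv_mul_cancel_left₀ ha.ne']

lemma PosSemidef.sub_inv_smul_vecMulVec_mulVec {M : Matrix n n ℝ} (hM : M.PosSemidef) (u : n → ℝ) :
    (M - (u ⬝ᵥ M *ᵥ u)⁻¹ • vecMulVec (M *ᵥ u) (M *ᵥ u)).PosSemidef := by
  set t := u ⬝ᵥ M *ᵥ u
  have hsymm : M.IsSymm := isHermitian_iff_isSymm.mp hM.1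
  refine .of_dotProduct_mulVec_nonneg
    (hM.1.sub ((posSemidef_vecMulVec_self_star (M *ᵥ u)).1.smul (.all _))) fun x => ?_
  have hCS := hM.dotProduct_mulVec_sq_le u x
  have ht : 0 ≤ t := by simpa using hM.dotProduct_mulVec_nonneg u
  have hx : 0 ≤ x ⬝ᵥ M *ᵥ x := by simpa using hM.dotProduct_mulVec_nonneg x
  rw [star_trivial, sub_mulVec, smul_mulVec, vecMulVec_mulVec, op_smul_eq_smul, dotProduct_sub,
    dotProduct_smul, dotProduct_smul, smul_eq_mul, smul_eq_mul, sub_nonneg,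
    ← hsymm.dotProduct_mulVec_comm u x, dotProduct_comm x, ← hsymm.dotProduct_mulVec_comm u x]
  rcases ht.eq_or_lt with ht | ht
  · simpa [← ht] using hx
  · rwa [inv_mul_le_iff₀ ht, ← sq]

variable {m K : Type*} [Field K]

lemma rank_add_le (A B : Matrix m n K) : (A + B).rank ≤ A.rank + B.rank := by
  rw [rank, rank, rank, mulVecLin_add]
  exact (Submodule.finrank_mono (LinearMap.range_add_le _ _)).trans
    (Submodule.finrank_add_le_finrank_add_finrank _ _)

lemma rank_lt_rank_of_ker_lt {A B : Matrix m n K}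
    (h : LinearMap.ker A.mulVecLin < LinearMap.ker B.mulVecLin) : B.rank < A.rank := by
  have hA := LinearMap.finrank_range_add_finrank_ker A.mulVecLin
  have hB := LinearMap.finrank_range_add_finrank_ker B.mulVecLin
  have := Submodule.finrank_lt_finrank_of_lt h
  rw [rank, rank]
  omega

lemma rank_sub_inv_smul_vecMulVec [Fintype m] (A : Matrix m n K) (u : n → K) (v : m → K)
    (h : v ⬝ᵥ A *ᵥ u ≠ 0) :
    (A - (v ⬝ᵥ A *ᵥ u)⁻¹ • vecMulVec (A *ᵥ u) (v ᵥ* A)).rank = A.rank - 1 := by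
  set B := A - (v ⬝ᵥ A *ᵥ u)⁻¹ • vecMulVec (A *ᵥ u) (v ᵥ* A)
  have hB : ∀ x, B *ᵥ x = A *ᵥ x - ((v ⬝ᵥ A *ᵥ u)⁻¹ * (v ⬝ᵥ A *ᵥ x)) • A *ᵥ u := fun x => by
    rw [sub_mulVec, smul_mulVec, vecMulVec_mulVec, op_smul_eq_smul, smul_smul, ← dotProduct_mulVec]
  have hker : LinearMap.ker A.mulVecLin < LinearMap.ker B.mulVecLin := by
    refine lt_of_le_of_ne (fun x (hx : A *ᵥ x = 0) => ?_) fun heq => ?_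
    · show B *ᵥ x = 0
      simp [hB, hx]
    · have hu : B *ᵥ u = 0 := by rw [hB, inv_mul_cancel₀ h, one_smul, sub_self]
      have : A *ᵥ u = 0 := (heq ▸ hu : u ∈ LinearMap.ker A.mulVecLin)
      exact h (by rw [this, dotProduct_zero])
  have hle : A.rank ≤ B.rank + 1 := by
    calc A.rank = (B + vecMulVec ((v ⬝ᵥ A *ᵥ u)⁻¹ • A *ᵥ u) (v ᵥ* A)).rank := by
          rw [smul_vecMulVec]; exact congrArg rank (sub_add_cancel _ _).symm
      _ ≤ B.rank + 1 := (rank_add_le _ _).trans (Nat.add_le_add_left (rank_vecMulVec_le _ _) _)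
  have := rank_lt_rank_of_ker_lt hker
  omega

end Matrix

/-- rank reduction: if `M`, `N` are psd with `N` of rank one and
`ker M ⊆ ker N`, then for some `λ > 0` the matrix `M - λN` is psd of rank
`rank M - 1`. -/
theorem stmt_16 (s : ℕ) (M N : Matrix (Fin s) (Fin s) ℝ)
    (hM : M.PosSemidef) (hN : N.PosSemidef) (hrk : N.rank = 1)
    (hker : LinearMap.ker M.mulVecLin ≤ LinearMap.ker N.mulVecLin) :
    ∃ lam : ℝ, 0 < lam ∧ (M - lam • N).PosSemidef ∧
      (M - lam • N).rank = M.rank - 1 := by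
  obtain ⟨w, hw, rfl⟩ := hN.exists_eq_vecMulVec_of_rank_eq_one hrk
  have hsymm : M.IsSymm := isHermitian_iff_isSymm.mp hM.1
  obtain ⟨u, rfl⟩ : ∃ u, M *ᵥ u = w := hsymm.mem_range_mulVecLin fun x hx => by
    have hx : (w ⬝ᵥ x) • w = 0 := by simpa [vecMulVec_mulVec] using hker hx
    exact (smul_eq_zero.mp hx).resolve_right hw
  have ht : 0 < u ⬝ᵥ M *ᵥ u := hM.dotProduct_mulVec_pos_of_mulVec_ne_zero hw
  refine ⟨_, inv_pos.mpr ht, hM.sub_inv_smul_vecMulVec_mulVec u, ?_⟩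
  have hvecMul : u ᵥ* M = M *ᵥ u := by rw [← mulVec_transpose, hsymm.eq]
  simpa only [hvecMul] using rank_sub_inv_smul_vecMulVec M u u ht.ne'
end
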